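/- Let X be a Lefschetz complex over a ring R with unity and let 𝒱 be a multivector field on X with X invariant. Then every basic set of 𝒱 is a strongly recurrent isolated invariant set. -/
import Mathlib


open scoped Classical

namespace CMVF

variable {R : Type*} [Ring R] {X : Type*} [Fintype X]

/-- A Lefschetz complex over `R` with cells `X`. -/
structure Lefschetz (R : Type*) [Ring R] (X : Type*) [Fintype X] where
  dim : X → ℕ
  κ : X → X → R
  dim_facet : ∀ x y, κ x y ≠ 0 → dim x = dim y + 1
  κ_sq : ∀ x z, (∑ y : X, κ x y * κ y z) = 0

namespace Lefschetz

variable (L : Lefschetz R X)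

/-- The face order `y ≤κ x` : the partial order generated by the facet relation. -/
def le (y x : X) : Prop := Relation.ReflTransGen (fun a b => L.κ b a ≠ 0) y x

/-- Closure of a set of cells: all faces of cells of `A`. -/
def cls (A : Set X) : Set X := {z | ∃ a ∈ A, L.le z a}

/-- Closure of a single cell. -/
def clPt (x : X) : Set X := L.cls {x}

/-- The minimal open set containing `x`. -/
def opn (x : X) : Set X := {z | L.le x z}

/-- `A` is closed. -/
def Closed (A : Set X) : Prop := L.cls A = A

/-- The mouth of `A`. -/
def mo (A : Set X) : Set X := L.cls A \ A

/-- `A` is proper: its mouth is closed. -/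
def Proper (A : Set X) : Prop := L.Closed (L.mo A)

/-- Relative closure within an ambient subcomplex `W`. -/
def clsIn (W A : Set X) : Set X := L.cls A ∩ W

/-- Relative mouth within an ambient subcomplex `W`. -/
def moIn (W A : Set X) : Set X := L.clsIn W A \ A

/-- The boundary operator of the subcomplex determined by `A`
(`∂ x = ∑ y ∈ A, κ x y • y` for `x ∈ A`). -/
noncomputable def bd (A : Set X) : (X → R) →ₗ[R] (X → R) where
  toFun f := fun y => if y ∈ A then ∑ x : X, (if x ∈ A then f x * L.κ x y else 0) else 0
  map_add' f g := by
    funext y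
    by_cases hy : y ∈ A
    · simp only [hy, if_true, Pi.add_apply]
      rw [← Finset.sum_add_distrib]
      refine Finset.sum_congr rfl fun x _ => ?_
      by_cases hx : x ∈ A <;> simp [hx, add_mul]
    · simp [hy]
  map_smul' r f := by
    funext y
    by_cases hy : y ∈ A
    · simp only [hy, if_true, Pi.smul_apply, smul_eq_mul, RingHom.id_apply]
      rw [Finset.mul_sum]
      refine Finset.sum_congr rfl fun x _ => ?_
      by_cases hx : x ∈ A <;> simp [hx, mul_assoc]
    · simp [hy]

/-- The `n`-chains of the subcomplex determined by `A`. -/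
noncomputable def chainGroup (A : Set X) (n : ℕ) : Submodule R (X → R) :=
  Submodule.span R {f | ∃ x ∈ A, L.dim x = n ∧ f = Pi.single x 1}

/-- The `n`-cycles of the subcomplex determined by `A`. -/
noncomputable def cycles (A : Set X) (n : ℕ) : Submodule R (X → R) :=
  L.chainGroup A n ⊓ LinearMap.ker (L.bd A)

/-- The `n`-boundaries of the subcomplex determined by `A`. -/
noncomputable def boundaries (A : Set X) (n : ℕ) : Submodule R (X → R) :=
  (L.chainGroup A (n + 1)).map (L.bd A)

/-- The Lefschetz homology `H^κ_n(A)` of the subcomplex determined by `A`. -/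
noncomputable def homology (A : Set X) (n : ℕ) : Type _ :=
  (L.cycles A n) ⧸ ((L.boundaries A n).comap (L.cycles A n).subtype)

noncomputable instance homologyAddCommGroup (A : Set X) (n : ℕ) :
    AddCommGroup (L.homology A n) :=
  inferInstanceAs (AddCommGroup
    ((L.cycles A n) ⧸ ((L.boundaries A n).comap (L.cycles A n).subtype)))

noncomputable instance homologyModule (A : Set X) (n : ℕ) :
    Module R (L.homology A n) :=
  inferInstanceAs (Module R
    ((L.cycles A n) ⧸ ((L.boundaries A n).comap (L.cycles A n).subtype)))

/-- `A` is a zero space: its Lefschetz homology vanishes. -/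
def HomologyZero (A : Set X) : Prop := ∀ n, Subsingleton (L.homology A n)

/-- The Poincaré polynomial `p_A(t) = ∑ rank H^κ_n(A) tⁿ`. -/
noncomputable def poincare (A : Set X) : Polynomial ℕ :=
  ∑ n ∈ Finset.image L.dim Finset.univ,
    Polynomial.C (Module.finrank R (L.homology A n)) * Polynomial.X ^ n

/-- `V` is a multivector: proper, with a unique maximal element. -/
def IsMV (V : Set X) : Prop :=
  L.Proper V ∧ ∃! m, m ∈ V ∧ ∀ x ∈ V, L.le x m

/-- A regular multivector: one with vanishing Lefschetz homology. -/
def Regular (V : Set X) : Prop := L.HomologyZero V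

end Lefschetz

/-- A combinatorial multivector field on a Lefschetz complex: a partition into multivectors. -/
structure MVField {R : Type*} [Ring R] {X : Type*} [Fintype X] (L : Lefschetz R X) where
  mvs : Set (Set X)
  isMV : ∀ V ∈ mvs, L.IsMV V
  cover : ∀ x : X, ∃! V, V ∈ mvs ∧ x ∈ V

namespace MVField

variable {L : Lefschetz R X} (F : MVField L)

/-- `[x]` : the multivector containing `x`. -/
noncomputable def mclass (x : X) : Set X := (F.cover x).exists.choose

lemma mclass_spec (x : X) : F.mclass x ∈ F.mvs ∧ x ∈ F.mclass x :=
  (F.cover x).exists.choose_spec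

/-- `x★` : the dominant cell of the multivector containing `x`. -/
noncomputable def star (x : X) : X :=
  ((F.isMV _ (F.mclass_spec x).1).2).exists.choose

/-- `[x]°` : the regular part of the multivector of `x`. -/
noncomputable def regPart (x : X) : Set X :=
  if L.Regular (F.mclass x) then F.mclass x else F.mclass x \ {F.star x}

/-- The multivalued map `Π_𝒱`. -/
noncomputable def Pi (x : X) : Set X :=
  if x = F.star x then L.clPt x \ F.regPart x else {F.star x}

/-- The multivalued map of the multivector field restricted to the subcomplex `W`. -/
noncomputable def PiIn (W : Set X) (x : X) : Set X := F.Pi x ∩ W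

/-- `φ : ℤ → X` is a full solution of the multivector field restricted to `W`. -/
def IsSolIn (W : Set X) (φ : ℤ → X) : Prop := ∀ i, φ (i + 1) ∈ F.PiIn W (φ i)

/-- There is a full solution (of the field restricted to `W`) through `x` with values in `A`. -/
def FullSolThroughIn (W : Set X) (x : X) (A : Set X) : Prop :=
  ∃ φ : ℤ → X, F.IsSolIn W φ ∧ (∃ i, φ i = x) ∧ ∀ i, φ i ∈ A

/-- `A` is `𝒱`-compatible. -/
def Compat (A : Set X) : Prop := ∀ x ∈ A, F.mclass x ⊆ A

/-- `[A]⁻` : the maximal `𝒱`-compatible subset of `A`. -/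
def lowerC (A : Set X) : Set X := {x ∈ A | F.mclass x ⊆ A}

/-- `[A]⁺` : the minimal `𝒱`-compatible superset of `A`. -/
def upperC (A : Set X) : Set X := ⋃ x ∈ A, F.mclass x

/-- `Inv A`, the invariant part of `A`, computed in the subcomplex `W`. -/
def InvPartIn (W A : Set X) : Set X :=
  {x ∈ A | F.FullSolThroughIn W (F.star x) (F.lowerC A)}

/-- `A` is invariant (within the subcomplex `W`). -/
def InvariantIn (W A : Set X) : Prop := F.InvPartIn W A = A

/-- `φ` is a path (solution) on the integer interval `[a,b]`, within the subcomplex `W`. -/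
def IsPathOnIn (W : Set X) (a b : ℤ) (φ : ℤ → X) : Prop :=
  ∀ i, a ≤ i → i < b → φ (i + 1) ∈ F.PiIn W (φ i)

/-- `S` admits an internal tangency within the subcomplex `W`. -/
def HasInternalTangencyIn (W S : Set X) : Prop :=
  ∃ (a b : ℤ) (φ : ℤ → X), a ≤ b ∧ F.IsPathOnIn W a b φ ∧
    (∀ i, a ≤ i → i ≤ b → φ i ∈ L.clsIn W S) ∧ φ a ∈ S ∧ φ b ∈ S ∧
    ∃ i, a ≤ i ∧ i ≤ b ∧ φ i ∈ L.moIn W S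

/-- `S` is an isolated invariant set within the subcomplex `W`. -/
def IsoInvIn (W S : Set X) : Prop :=
  F.InvariantIn W S ∧ ¬ F.HasInternalTangencyIn W S

/-- `N` is a trapping region within the subcomplex `W`. -/
def TrappingIn (W N : Set X) : Prop :=
  N ⊆ W ∧ F.Compat N ∧ ∀ x ∈ N, F.PiIn W x ⊆ N

/-- `N` is a backward trapping region within the subcomplex `W`. -/
def BackTrappingIn (W N : Set X) : Prop :=
  N ⊆ W ∧ F.Compat N ∧ ∀ x ∈ W, ∀ y ∈ F.PiIn W x, y ∈ N → x ∈ N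

/-- `A` is an attractor within the subcomplex `W`. -/
def AttractorIn (W A : Set X) : Prop :=
  ∃ N, F.TrappingIn W N ∧ A = F.InvPartIn W N

/-- `A` is a repeller within the subcomplex `W`. -/
def RepellerIn (W A : Set X) : Prop :=
  ∃ N, F.BackTrappingIn W N ∧ A = F.InvPartIn W N

/-- The α-limit set of a full solution `φ`. -/
def alphaIn (W : Set X) (φ : ℤ → X) : Set X :=
  ⋂ k : ℕ, F.InvPartIn W (F.upperC (φ '' {i : ℤ | i ≤ -(k : ℤ)}))

/-- The ω-limit set of a full solution `φ`. -/
def omegaIn (W : Set X) (φ : ℤ → X) : Set X :=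
  ⋂ k : ℕ, F.InvPartIn W (F.upperC (φ '' {i : ℤ | (k : ℤ) ≤ i}))

/-- `C(A',A)` : the set of cells lying on connections running from `A'` to `A`. -/
def ConnIn (W A' A : Set X) : Set X :=
  {x | ∃ φ : ℤ → X, F.IsSolIn W φ ∧ (∃ i, φ i = F.star x) ∧
        F.alphaIn W φ ⊆ A' ∧ F.omegaIn W φ ⊆ A}

/-- `(A, Rp)` is an attractor-repeller pair in the subcomplex `W`. -/
def ARPairIn (W A Rp : Set X) : Prop :=
  F.AttractorIn W A ∧ F.RepellerIn W Rp ∧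
    A = F.InvPartIn W (W \ Rp) ∧ Rp = F.InvPartIn W (W \ A)

/-- `M` is a Morse decomposition of the subcomplex `W`, with admissible order `le`. -/
def MorseDecompIn (W : Set X) {P : Type*} [Finite P] (le : P → P → Prop)
    (M : P → Set X) : Prop :=
  IsPartialOrder P le ∧
  (∀ r, F.IsoInvIn W (M r)) ∧
  (∀ r r', r ≠ r' → Disjoint (M r) (M r')) ∧
  (∀ φ : ℤ → X, F.IsSolIn W φ →
    ∃ r r', le r r' ∧ F.alphaIn W φ ⊆ M r' ∧ F.omegaIn W φ ⊆ M r) ∧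
  (∀ φ : ℤ → X, F.IsSolIn W φ → ∀ r,
    F.alphaIn W φ ⊆ M r → F.omegaIn W φ ⊆ M r → Set.range φ ⊆ M r)

/-- The Morse set `M(I)` of a family of sets indexed by `I ⊆ P`. -/
def MorseSetIn (W : Set X) {P : Type*} (M : P → Set X) (I : Set P) : Set X :=
  ⋃ r ∈ I, ⋃ r' ∈ I, F.ConnIn W (M r') (M r)

/-- `(P₁, P₂)` is an index pair for the isolated invariant set `S`. -/
def IndexPair (S P₁ P₂ : Set X) : Prop :=
  L.Closed P₁ ∧ L.Closed P₂ ∧ P₂ ⊆ P₁ ∧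
  (∀ x ∈ P₂, ∀ y ∈ F.Pi x, y ∈ P₁ → y ∈ P₂) ∧
  (∀ x ∈ P₁, (∃ y ∈ F.Pi x, y ∉ P₁) → x ∈ P₂) ∧
  S = F.InvPartIn Set.univ (P₁ \ P₂)

/-- `x ⤳_A y` : there is a path of length at least two in `A` from `x★` to `y★`. -/
def PathConn (A : Set X) (x y : X) : Prop :=
  ∃ (a b : ℤ) (φ : ℤ → X), a < b ∧
    (∀ i, a ≤ i → i < b → φ (i + 1) ∈ F.Pi (φ i)) ∧
    (∀ i, a ≤ i → i ≤ b → φ i ∈ A) ∧ φ a = F.star x ∧ φ b = F.star y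

/-- The chain recurrent set. -/
def CR : Set X := {x | F.PathConn Set.univ x x}

/-- `B` is a basic set: an equivalence class of mutual connectedness in `CR`. -/
def IsBasicSet (B : Set X) : Prop :=
  ∃ x ∈ F.CR, B = {y ∈ F.CR | F.PathConn Set.univ x y ∧ F.PathConn Set.univ y x}

/-- The set `E_P` of cells of `P₁` all of whose forward solutions meet `P₂`. -/
def Ep (P₁ P₂ : Set X) : Set X :=
  {x ∈ P₁ | ∀ φ : ℕ → X, φ 0 = x → (∀ i, φ (i + 1) ∈ F.Pi (φ i)) → ∃ i, φ i ∈ P₂}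

/-- The preorder `≤_𝒱` induced by the arrows of the multivector field. -/
def leV : X → X → Prop := Relation.ReflTransGen (fun y x => y ∈ F.Pi x)

/-- The multivector field is acyclic: `≤_𝒱` is a partial order. -/
def Acyclic : Prop := ∀ x y, F.leV x y → F.leV y x → x = y

end MVField

namespace MVField

variable {L : Lefschetz R X} (F : MVField L)

lemma mclass_eq' {x y : X} (hy : y ∈ F.mclass x) : F.mclass y = F.mclass x :=
  (F.cover y).unique ⟨(F.mclass_spec y).1, (F.mclass_spec y).2⟩ ⟨(F.mclass_spec x).1, hy⟩

lemma star_spec' (x : X) :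
    F.star x ∈ F.mclass x ∧ ∀ z ∈ F.mclass x, L.le z (F.star x) :=
  ((F.isMV _ (F.mclass_spec x).1).2).exists.choose_spec

lemma star_eq_of_mem' {x y : X} (hy : y ∈ F.mclass x) : F.star y = F.star x := by
  have hcl : F.mclass y = F.mclass x := F.mclass_eq' hy
  have h1 := F.star_spec' y
  rw [hcl] at h1
  exact ((F.isMV _ (F.mclass_spec x).1).2).unique h1 (F.star_spec' x)

lemma star_star' (x : X) : F.star (F.star x) = F.star x :=
  F.star_eq_of_mem' (F.star_spec' x).1

lemma pathConn_congr' {A : Set X} {x y x' y' : X} (hx : F.star x = F.star x')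
    (hy : F.star y = F.star y') (h : F.PathConn A x y) : F.PathConn A x' y' := by
  obtain ⟨a, b, φ, hab, hstep, hval, ha, hb⟩ := h
  exact ⟨a, b, φ, hab, hstep, hval, by rw [ha, hx], by rw [hb, hy]⟩

lemma pathConn_trans' {A : Set X} {x y z : X} (h1 : F.PathConn A x y)
    (h2 : F.PathConn A y z) : F.PathConn A x z := by
  obtain ⟨a1, b1, φ1, hab1, hs1, hv1, he1, he1'⟩ := h1
  obtain ⟨a2, b2, φ2, hab2, hs2, hv2, he2, he2'⟩ := h2
  refine ⟨a1, b1 + (b2 - a2), fun i => if i ≤ b1 then φ1 i else φ2 (i - b1 + a2),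
    by omega, ?_, ?_, ?_, ?_⟩
  · intro i hi hi'
    by_cases h : i + 1 ≤ b1
    · simp only [if_pos h, if_pos (show i ≤ b1 by omega)]
      exact hs1 i hi (by omega)
    · by_cases h' : i ≤ b1
      · have hib : i = b1 := by omega
        simp only [if_neg (show ¬ (i + 1 ≤ b1) by omega), if_pos h',
          show i + 1 - b1 + a2 = a2 + 1 by omega]
        rw [hib, he1', ← he2]
        exact hs2 a2 le_rfl hab2
      · simp only [if_neg h', if_neg h]
        rw [show i + 1 - b1 + a2 = (i - b1 + a2) + 1 by ring]
        exact hs2 _ (by omega) (by omega)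
  · intro i hi hi'
    by_cases h : i ≤ b1
    · simp only [if_pos h]; exact hv1 i hi h
    · simp only [if_neg h]; exact hv2 _ (by omega) (by omega)
  · simp only [if_pos (le_of_lt hab1)]; exact he1
  · have h : ¬ (b1 + (b2 - a2) ≤ b1) := by omega
    simp only [if_neg h]
    rw [show b1 + (b2 - a2) - b1 + a2 = b2 by ring]
    exact he2'

lemma eq_star_of_mem_Pi' {x y : X} (hx : x ≠ F.star x) (hy : y ∈ F.Pi x) :
    y = F.star x := by
  rw [MVField.Pi, if_neg hx] at hy
  exact hy

lemma star_mem_Pi_of_ne' {x : X} (hx : x ≠ F.star x) : F.star x ∈ F.Pi x := by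
  rw [MVField.Pi, if_neg hx]
  exact rfl

/-- Lemma A: a `Π`-path can be converted into a path between stars, or the
endpoint stars coincide. -/
lemma toStar' {A : Set X} (hA : ∀ u ∈ A, F.star u ∈ A) {a b : ℤ} {φ : ℤ → X}
    (hab : a < b)
    (hstep : ∀ i, a ≤ i → i < b → φ (i + 1) ∈ F.Pi (φ i))
    (hval : ∀ i, a ≤ i → i ≤ b → φ i ∈ A) :
    F.PathConn A (φ a) (φ b) ∨ F.star (φ a) = F.star (φ b) := by
  classical
  set ψ : ℤ → X := fun i => if i ≤ b then φ i else F.star (φ b) with hψ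
  have hψstep : ∀ i, a ≤ i → i ≤ b → ψ (i + 1) ∈ F.Pi (ψ i) ∨ (i = b ∧ φ b = F.star (φ b)) := by
    intro i hi hi'
    by_cases h : i + 1 ≤ b
    · left
      simp only [hψ, if_pos h, if_pos (show i ≤ b by omega)]
      exact hstep i hi (by omega)
    · have hib : i = b := by omega
      by_cases hb : φ b = F.star (φ b)
      · right; exact ⟨hib, hb⟩
      · left
        simp only [hψ]
        rw [if_neg (show ¬ (i + 1 ≤ b) by omega), if_pos hi', hib]
        exact F.star_mem_Pi_of_ne' hb
  by_cases h0 : φ a = F.star (φ a) <;> by_cases h1 : φ b = F.star (φ b)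
  · exact Or.inl ⟨a, b, φ, hab, hstep, hval, h0, h1⟩
  · refine Or.inl ⟨a, b + 1, ψ, by omega, ?_, ?_, ?_, ?_⟩
    · intro i hi hi'
      rcases hψstep i hi (by omega) with h | h
      · exact h
      · exact absurd h.2 h1
    · intro i hi hi'
      by_cases h : i ≤ b
      · simp only [hψ, if_pos h]; exact hval i hi h
      · simp only [hψ, if_neg h]; exact hA _ (hval b (le_of_lt hab) le_rfl)
    · simp only [hψ, if_pos (le_of_lt hab)]; exact h0
    · simp only [hψ, if_neg (show ¬ (b + 1 ≤ b) by omega)]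
  · have hstar : φ (a + 1) = F.star (φ a) :=
      F.eq_star_of_mem_Pi' h0 (hstep a le_rfl hab)
    by_cases hb' : a + 1 = b
    · right
      rw [← h1, ← hb']
      exact hstar.symm
    · refine Or.inl ⟨a + 1, b, φ, by omega, fun i hi hi' => hstep i (by omega) hi',
        fun i hi hi' => hval i (by omega) hi', hstar, h1⟩
  · have hstar : φ (a + 1) = F.star (φ a) :=
      F.eq_star_of_mem_Pi' h0 (hstep a le_rfl hab)
    refine Or.inl ⟨a + 1, b + 1, ψ, by omega, ?_, ?_, ?_, ?_⟩
    · intro i hi hi'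
      rcases hψstep i (by omega) (by omega) with h | h
      · exact h
      · exact absurd h.2 h1
    · intro i hi hi'
      by_cases h : i ≤ b
      · simp only [hψ, if_pos h]; exact hval i (by omega) h
      · simp only [hψ, if_neg h]; exact hA _ (hval b (le_of_lt hab) le_rfl)
    · simp only [hψ, if_pos (show a + 1 ≤ b by omega)]; exact hstar
    · simp only [hψ, if_neg (show ¬ (b + 1 ≤ b) by omega)]

end MVField

end CMVF

open CMVF

variable {R : Type*} [Ring R] {X : Type*} [Fintype X]

/-- Theorem: every basic set is a strongly recurrent isolated invariant set. -/
theorem basic_set_strongly_recurrent_isolated (L : Lefschetz R X) (F : MVField L)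
    (hX : F.InvariantIn Set.univ Set.univ) (B : Set X) (hB : F.IsBasicSet B) :
    F.IsoInvIn Set.univ B ∧ ∀ x ∈ B, ∀ y ∈ B, F.PathConn B x y := by
  obtain ⟨x₀, hx₀, hBdef⟩ := hB
  have hBmem : ∀ z, z ∈ B ↔
      (F.PathConn Set.univ z z ∧ F.PathConn Set.univ x₀ z ∧ F.PathConn Set.univ z x₀) := by
    intro z
    rw [hBdef]
    exact Iff.rfl
  have hsat : ∀ z u, F.star z = F.star u → u ∈ B → z ∈ B := by
    intro z u h hu
    rw [hBmem] at hu ⊢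
    exact ⟨F.pathConn_congr' h.symm h.symm hu.1, F.pathConn_congr' rfl h.symm hu.2.1,
      F.pathConn_congr' h.symm rfl hu.2.2⟩
  have hstarB : ∀ u ∈ B, F.star u ∈ B := fun u hu => hsat _ u (F.star_star' u) hu
  have huniv : ∀ u : X, u ∈ (Set.univ : Set X) → F.star u ∈ (Set.univ : Set X) :=
    fun _ _ => Set.mem_univ _
  have key : ∀ (a b i : ℤ) (φ : ℤ → X), a ≤ i → i ≤ b →
      (∀ j, a ≤ j → j < b → φ (j + 1) ∈ F.Pi (φ j)) → φ a ∈ B → φ b ∈ B →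
      φ i ∈ B := by
    intro a b i φ hai hib hstep hBa hBb
    have h1 : F.PathConn Set.univ (φ a) (φ i) ∨ F.star (φ a) = F.star (φ i) := by
      rcases eq_or_lt_of_le hai with h | h
      · right; rw [h]
      · exact F.toStar' huniv h (fun j hj hj' => hstep j hj (by omega))
          (fun j _ _ => Set.mem_univ _)
    have h2 : F.PathConn Set.univ (φ i) (φ b) ∨ F.star (φ i) = F.star (φ b) := by
      rcases eq_or_lt_of_le hib with h | h
      · right; rw [h]
      · exact F.toStar' huniv h (fun j hj hj' => hstep j (by omega) (by omega))
          (fun j _ _ => Set.mem_univ _)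
    rcases h1 with p1 | e1
    · rcases h2 with p2 | e2
      · rw [hBmem] at hBa hBb ⊢
        have hx0i : F.PathConn Set.univ x₀ (φ i) := F.pathConn_trans' hBa.2.1 p1
        have hix0 : F.PathConn Set.univ (φ i) x₀ := F.pathConn_trans' p2 hBb.2.2
        exact ⟨F.pathConn_trans' hix0 hx0i, hx0i, hix0⟩
      · exact hsat _ _ e2 hBb
    · exact hsat _ _ e1.symm hBa
  have hlow : ∀ z ∈ B, z ∈ F.lowerC B := fun z hz =>
    ⟨hz, fun w hw => hsat w z (F.star_eq_of_mem' hw) hz⟩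
  refine ⟨⟨?_, ?_⟩, ?_⟩
  · -- invariance
    apply Set.Subset.antisymm
    · intro x hx
      exact hx.1
    · intro x hx
      refine ⟨hx, ?_⟩
      obtain ⟨a, b, φ, hab, hstep, hval, ha, hb⟩ := ((hBmem x).1 hx).1
      have hφa : φ a ∈ B := by rw [ha]; exact hstarB x hx
      have hφb : φ b ∈ B := by rw [hb]; exact hstarB x hx
      set ℓ : ℤ := b - a with hℓ
      have hℓpos : 0 < ℓ := by omega
      have hmod : ∀ i : ℤ, 0 ≤ (i - a) % ℓ ∧ (i - a) % ℓ < ℓ :=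
        fun i => ⟨Int.emod_nonneg _ (by omega), Int.emod_lt_of_pos _ hℓpos⟩
      refine ⟨fun i => φ (a + (i - a) % ℓ), ?_, ⟨a, ?_⟩, ?_⟩
      · intro i
        have hr := hmod i
        set r : ℤ := (i - a) % ℓ with hrdef
        have hq := Int.emod_add_mul_ediv (i - a) ℓ
        have hsum : i + 1 - a = (r + 1) + ℓ * ((i - a) / ℓ) := by
          rw [hrdef]; linarith [hq]
        have hm1 : (i + 1 - a) % ℓ = (r + 1) % ℓ := by
          rw [hsum, Int.add_mul_emod_self_left]
        constructor
        · -- membership in F.Pi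
          by_cases hc : r + 1 = ℓ
          · have hm0 : (i + 1 - a) % ℓ = 0 := by rw [hm1, hc, Int.emod_self]
            have hs := hstep (a + r) (by omega) (by omega)
            simp only [hm0, add_zero]
            rw [show φ a = φ b by rw [ha, hb], show b = a + r + 1 by omega]
            exact hs
          · have hm2 : (i + 1 - a) % ℓ = r + 1 := by
              rw [hm1]; exact Int.emod_eq_of_lt (by omega) (by omega)
            have hs := hstep (a + r) (by omega) (by omega)
            simp only [hm2]
            rw [show a + (r + 1) = a + r + 1 by ring]
            exact hs
        · exact Set.mem_univ _
      · show φ (a + (a - a) % ℓ) = F.star x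
        rw [show a + (a - a) % ℓ = a by simp]
        exact ha
      · intro i
        have hr := hmod i
        exact hlow _ (key a b (a + (i - a) % ℓ) φ (by omega) (by omega) hstep hφa hφb)
  · -- no internal tangency
    rintro ⟨a, b, ψ, hab, hpath, hcls, hpa, hpb, i, hia, hib, hmo⟩
    exact hmo.2 (key a b i ψ hia hib (fun j hj hj' => (hpath j hj hj').1) hpa hpb)
  · -- strong recurrence
    intro u hu v hv
    obtain ⟨a, b, φ, hab, hstep, hval, ha, hb⟩ :=
      F.pathConn_trans' ((hBmem u).1 hu).2.2 ((hBmem v).1 hv).2.1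
    exact ⟨a, b, φ, hab, hstep,
      fun i hi hi' => key a b i φ hi hi' hstep
        (by rw [ha]; exact hstarB u hu) (by rw [hb]; exact hstarB v hv), ha, hb⟩
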